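/- arXiv:2405.20809 — 2 statements merged into one kernel-verified Lean document; each statement's English description precedes it below -/
import Mathlib

section
/- Let G be a compact Lie group, X a G-space, n ≥ 2 an integer, and let a ∈ X with stabilizer subgroup H = {g ∈ G : g·a = a}. Then cat_H(X^{n−1}) ≤ TC_{G,n}(X), where X^{n−1} carries the diagonal H-action. -/
open Set

noncomputable section

/-- Two maps `f g : X → Y` are `G`-homotopic on a subset `S ⊆ X`, with respect to the
actions `σX` on `X` and `σY` on `Y`. -/
def GHomotopicOn (G : Type*) {X Y : Type*} [TopologicalSpace X] [TopologicalSpace Y]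
    (σX : G → X → X) (σY : G → Y → Y) (f g : X → Y) (S : Set X) : Prop :=
  ∃ H : X × unitInterval → Y,
    ContinuousOn H (S ×ˢ (Set.univ : Set unitInterval)) ∧
    (∀ x ∈ S, H (x, 0) = f x) ∧
    (∀ x ∈ S, H (x, 1) = g x) ∧
    (∀ a : G, ∀ x ∈ S, ∀ t, H (σX a x, t) = σY a (H (x, t)))

/-- The equivariant sectional category `secat_G(p)` of a map `p : E → B`, with respect to
actions `σE` on `E` and `σB` on `B`: the least `k` such that `B` is covered by `k`
`G`-invariant open sets, each admitting a continuous equivariant homotopy section of `p`;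
`⊤` if there is no such `k`. -/
def eqSecat (G : Type*) {E B : Type*} [TopologicalSpace E] [TopologicalSpace B]
    (σE : G → E → E) (σB : G → B → B) (p : E → B) : ℕ∞ :=
  sInf {N : ℕ∞ | ∃ k : ℕ, N = (k : ℕ∞) ∧ ∃ U : Fin k → Set B,
    (∀ i, IsOpen (U i)) ∧
    (∀ i, ∀ a : G, ∀ b ∈ U i, σB a b ∈ U i) ∧
    (∀ b : B, ∃ i, b ∈ U i) ∧
    (∀ i, ∃ s : B → E, ContinuousOn s (U i) ∧
      (∀ a : G, ∀ b ∈ U i, s (σB a b) = σE a (s b)) ∧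
      GHomotopicOn G σB σB (p ∘ s) id (U i))}

/-- A `G`-invariant open subset `U` of `X` is `G`-categorical if the inclusion `U ↪ X`
is `G`-homotopic to a map taking values in a single orbit. -/
def GCategoricalSet (G : Type*) {X : Type*} [TopologicalSpace X]
    (σ : G → X → X) (U : Set X) : Prop :=
  IsOpen U ∧ (∀ a : G, ∀ x ∈ U, σ a x ∈ U) ∧
  ∃ x₀ : X, ∃ H : X × unitInterval → X,
    ContinuousOn H (U ×ˢ (Set.univ : Set unitInterval)) ∧
    (∀ x ∈ U, H (x, 0) = x) ∧
    (∀ x ∈ U, ∃ a : G, H (x, 1) = σ a x₀) ∧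
    (∀ a : G, ∀ x ∈ U, ∀ t, H (σ a x, t) = σ a (H (x, t)))

/-- The equivariant (Lusternik–Schnirelmann) category `cat_G(X)`: the least number of
`G`-categorical open sets covering `X`. -/
def eqCat (G : Type*) {X : Type*} [TopologicalSpace X] (σ : G → X → X) : ℕ∞ :=
  sInf {N : ℕ∞ | ∃ k : ℕ, N = (k : ℕ∞) ∧ ∃ U : Fin k → Set X,
    (∀ x : X, ∃ i, x ∈ U i) ∧ (∀ i, GCategoricalSet G σ (U i))}

/-- The time `i/(n-1)` in the unit interval, for `i : Fin n`. -/
def seqTime (n : ℕ) (i : Fin n) : unitInterval :=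
  ⟨(i : ℝ) / ((n : ℝ) - 1), by
    have h0 : 0 < n := i.pos
    have h1 : (0 : ℝ) ≤ (n : ℝ) - 1 := by
      have : (1 : ℝ) ≤ (n : ℝ) := by exact_mod_cast h0
      linarith
    refine ⟨div_nonneg (Nat.cast_nonneg _) h1, ?_⟩
    rcases eq_or_lt_of_le h1 with h | h
    · rw [← h, div_zero]; norm_num
    · rw [div_le_one h]
      have : ((i : ℕ) : ℝ) + 1 ≤ (n : ℝ) := by exact_mod_cast i.is_lt
      linarith⟩

/-- The generalized free path space fibration
`π_n : X^I → X^n`, `γ ↦ (γ(0), γ(1/(n-1)), …, γ(1))`. -/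
def piNMap (X : Type*) [TopologicalSpace X] (n : ℕ) :
    C(unitInterval, X) → (Fin n → X) :=
  fun γ i => γ (seqTime n i)

/-- The action induced on the free path space `X^I` by an action on `X`. -/
def pathAct {G X : Type*} [TopologicalSpace X] (σ : G → X → X)
    (hc : ∀ a : G, Continuous (σ a)) : G → C(unitInterval, X) → C(unitInterval, X) :=
  fun a γ => ⟨fun t => σ a (γ t), (hc a).comp γ.continuous⟩

/-- The diagonal action on `X^n` induced by an action on `X`. -/
def diagAct {G X : Type*} (σ : G → X → X) (n : ℕ) : G → (Fin n → X) → (Fin n → X) :=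
  fun a x i => σ a (x i)

/-- The sequential equivariant topological complexity `TC_{G,n}(X) := secat_G(π_n)`. -/
def eqTC (G : Type*) {X : Type*} [TopologicalSpace X] (σ : G → X → X)
    (hc : ∀ a : G, Continuous (σ a)) (n : ℕ) : ℕ∞ :=
  eqSecat G (pathAct σ hc) (diagAct σ n) (piNMap X n)

/-- The `n`-fold fibre product `E^n_B` of `p : E → B`. -/
def FibProd {E B : Type*} (p : E → B) (n : ℕ) : Type _ :=
  {x : Fin n → E // ∀ i j, p (x i) = p (x j)}

instance {E B : Type*} [TopologicalSpace E] (p : E → B) (n : ℕ) :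
    TopologicalSpace (FibProd p n) :=
  inferInstanceAs (TopologicalSpace {x : Fin n → E // ∀ i j, p (x i) = p (x j)})

/-- The space `E^I_B` of paths in `E` lying in a single fibre of `p : E → B`. -/
def ParPath {E B : Type*} [TopologicalSpace E] (p : E → B) : Type _ :=
  {γ : C(unitInterval, E) // ∀ s t : unitInterval, p (γ s) = p (γ t)}

instance {E B : Type*} [TopologicalSpace E] (p : E → B) :
    TopologicalSpace (ParPath p) :=
  inferInstanceAs (TopologicalSpace
    {γ : C(unitInterval, E) // ∀ s t : unitInterval, p (γ s) = p (γ t)})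

/-- The parametrized endpoint fibration `Π_n : E^I_B → E^n_B`. -/
def PiN {E B : Type*} [TopologicalSpace E] (p : E → B) (n : ℕ) :
    ParPath p → FibProd p n :=
  fun γ => ⟨fun i => γ.1 (seqTime n i), fun _ _ => γ.2 _ _⟩

/-- The action induced on `E^n_B` by a fibrewise-compatible action on `E`. -/
def fibProdAct {G E B : Type*} (σE : G → E → E) (p : E → B)
    (hp : ∀ a : G, ∀ e e' : E, p e = p e' → p (σE a e) = p (σE a e')) (n : ℕ) :
    G → FibProd p n → FibProd p n :=
  fun a x => ⟨fun i => σE a (x.1 i), fun i j => hp a _ _ (x.2 i j)⟩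

/-- The action induced on `E^I_B` by a fibrewise-compatible action on `E`. -/
def parPathAct {G E B : Type*} [TopologicalSpace E] (σE : G → E → E)
    (hc : ∀ a : G, Continuous (σE a)) (p : E → B)
    (hp : ∀ a : G, ∀ e e' : E, p e = p e' → p (σE a e) = p (σE a e')) :
    G → ParPath p → ParPath p :=
  fun a γ => ⟨⟨fun t => σE a (γ.1 t), (hc a).comp γ.1.continuous⟩,
    fun s t => hp a _ _ (γ.2 s t)⟩

/-- The sequential equivariant parametrized topological complexity
`TC_{G,n}[p : E → B] := secat_G(Π_n : E^I_B → E^n_B)`. -/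
def eqPTC (G : Type*) {E B : Type*} [TopologicalSpace E] (σE : G → E → E)
    (hc : ∀ a : G, Continuous (σE a)) (p : E → B)
    (hp : ∀ a : G, ∀ e e' : E, p e = p e' → p (σE a e) = p (σE a e')) (n : ℕ) : ℕ∞ :=
  eqSecat G (parPathAct σE hc p hp) (fibProdAct σE p hp n) (PiN p n)

/-- `σ` is a continuous action of the topological group `G` on `X`,
i.e. `X` is a `G`-space. -/
def IsGAction (G : Type*) [Group G] [TopologicalSpace G] {X : Type*} [TopologicalSpace X]
    (σ : G → X → X) : Prop :=
  (∀ x, σ 1 x = x) ∧ (∀ a b x, σ (a * b) x = σ a (σ b x)) ∧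
  Continuous (fun q : G × X => σ q.1 q.2)

/-- `p : E → B` is a `G`-fibration: a continuous equivariant map with the `G`-homotopy
lifting property with respect to all `G`-spaces. -/
def IsGFibration (G : Type*) [Group G] [TopologicalSpace G] {E : Type u} {B : Type v}
    [TopologicalSpace E] [TopologicalSpace B]
    (σE : G → E → E) (σB : G → B → B) (p : E → B) : Prop :=
  Continuous p ∧ (∀ a e, p (σE a e) = σB a (p e)) ∧
  ∀ (X : Type (max u v)) (_ : TopologicalSpace X) (σX : G → X → X), IsGAction G σX →
    ∀ (f : X → E) (h : X × unitInterval → B),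
      Continuous f → (∀ a x, f (σX a x) = σE a (f x)) →
      Continuous h → (∀ a x t, h (σX a x, t) = σB a (h (x, t))) →
      (∀ x, h (x, 0) = p (f x)) →
      ∃ hl : X × unitInterval → E, Continuous hl ∧
        (∀ a x t, hl (σX a x, t) = σE a (hl (x, t))) ∧
        (∀ x, hl (x, 0) = f x) ∧ (∀ x t, p (hl (x, t)) = h (x, t))

/-- A `G`-space is `G`-connected if all fixed point sets of closed subgroups
are path-connected. -/
def GConnected (G : Type*) [Group G] [TopologicalSpace G] {X : Type*} [TopologicalSpace X]
    (σ : G → X → X) : Prop :=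
  ∀ H : Subgroup G, IsClosed (H : Set G) →
    IsPathConnected {x : X | ∀ h ∈ H, σ h x = x}

/-- A `G`-space is `G`-contractible if its identity map is `G`-homotopic to a map
taking values in a single orbit. -/
def GContractible (G : Type*) {X : Type*} [TopologicalSpace X] (σ : G → X → X) : Prop :=
  ∃ x₀ : X, ∃ H : X × unitInterval → X, Continuous H ∧
    (∀ x, H (x, 0) = x) ∧
    (∀ x, ∃ a : G, H (x, 1) = σ a x₀) ∧
    (∀ a : G, ∀ x t, H (σ a x, t) = σ a (H (x, t)))

/-- Fibrewise `G`-homotopy between fibrewise maps `f g : E → E'` over `B`. -/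
def FibrewiseGHomotopic (G : Type*) {E E' B : Type*} [TopologicalSpace E]
    [TopologicalSpace E'] (σE : G → E → E) (σE' : G → E' → E')
    (p : E → B) (p' : E' → B) (f g : E → E') : Prop :=
  ∃ H : E × unitInterval → E', Continuous H ∧
    (∀ x, H (x, 0) = f x) ∧ (∀ x, H (x, 1) = g x) ∧
    (∀ a : G, ∀ x t, H (σE a x, t) = σE' a (H (x, t))) ∧
    (∀ x t, p' (H (x, t)) = p x)

end

/-!
Let `U ⊆ X^n` be an invariant open set carrying an equivariant section `s` of `π_n` up to
`G`-homotopy. Then `id_U` is `G`-homotopic to `π_n ∘ s`, which, by sliding every sample time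
of the path `s y` back to `0`, is `G`-homotopic to `y ↦ (s y 0, …, s y 0)`; using the `0`-th
coordinate of the section homotopy once more, this is `G`-homotopic to `y ↦ (y₀, …, y₀)`.
On the slice `{a} × X^{n-1}`, which the stabilizer `H` of `a` preserves, `y₀ = a`, so dropping
the first coordinate contracts `{x | (a, x) ∈ U}` `H`-equivariantly onto the point `(a, …, a)`.
Pulling a cover realizing `TC_{G,n}(X)` back along `x ↦ (a, x)` therefore gives an
`H`-categorical cover of `X^{n-1}` of the same size.
-/

theorem ContinuousOn.if_le {α β γ : Type*} [TopologicalSpace α] [TopologicalSpace β]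
    [LinearOrder β] [OrderClosedTopology β] [TopologicalSpace γ]
    {f g : α → β} {f' g' : α → γ} {s : Set α} [∀ x, Decidable (f x ≤ g x)]
    (hf' : ContinuousOn f' s) (hg' : ContinuousOn g' s)
    (hf : Continuous f) (hg : Continuous g)
    (hfg : ∀ x ∈ s, f x = g x → f' x = g' x) :
    ContinuousOn (fun x => if f x ≤ g x then f' x else g' x) s := by
  rw [continuousOn_iff_continuous_domRestrict] at hf' hg' ⊢
  exact Continuous.if_le (f := fun x : s => f x) (g := fun x : s => g x)
    hf' hg' (hf.comp continuous_subtype_val) (hg.comp continuous_subtype_val)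
    (fun x h => hfg x x.2 h)

namespace GHomotopicOn

variable {G X Y : Type*} [TopologicalSpace X] [TopologicalSpace Y]
  {σX : G → X → X} {σY : G → Y → Y} {f g k : X → Y} {S : Set X}

theorem symm (h : GHomotopicOn G σX σY f g S) : GHomotopicOn G σX σY g f S := by
  obtain ⟨H, hH, h0, h1, hequiv⟩ := h
  refine ⟨fun p => H (p.1, unitInterval.symm p.2), ?_, fun x hx => by simpa using h1 x hx,
    fun x hx => by simpa using h0 x hx, fun a x hx t => hequiv a x hx (unitInterval.symm t)⟩
  exact hH.comp (by fun_prop) fun p hp => ⟨hp.1, trivial⟩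

theorem trans (h₁ : GHomotopicOn G σX σY f g S) (h₂ : GHomotopicOn G σX σY g k S) :
    GHomotopicOn G σX σY f k S := by
  obtain ⟨H₁, hH₁, h₁0, h₁1, h₁e⟩ := h₁
  obtain ⟨H₂, hH₂, h₂0, h₂1, h₂e⟩ := h₂
  refine ⟨fun p => if (p.2 : ℝ) ≤ 1 / 2
      then H₁ (p.1, Set.projIcc 0 1 zero_le_one (2 * p.2))
      else H₂ (p.1, Set.projIcc 0 1 zero_le_one (2 * p.2 - 1)), ?_, ?_, ?_, ?_⟩
  · refine ContinuousOn.if_le (hH₁.comp (by fun_prop) fun p hp => ⟨hp.1, trivial⟩)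
      (hH₂.comp (by fun_prop) fun p hp => ⟨hp.1, trivial⟩) (by fun_prop) continuous_const ?_
    rintro ⟨x, t⟩ ⟨hx, -⟩ (ht : (t : ℝ) = 1 / 2)
    have hone : Set.projIcc (0 : ℝ) 1 zero_le_one (2 * t) = 1 := by
      rw [ht]; norm_num
    have hzero : Set.projIcc (0 : ℝ) 1 zero_le_one (2 * t - 1) = 0 := by
      rw [ht]; norm_num
    simp only [hone, hzero, h₁1 x hx, h₂0 x hx]
  · intro x hx
    norm_num
    exact h₁0 x hx
  · intro x hx
    norm_num
    exact h₂1 x hx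
  · intro a x hx t
    dsimp only
    split_ifs
    · exact h₁e a x hx _
    · exact h₂e a x hx _

theorem comp_left {Z : Type*} [TopologicalSpace Z] {σZ : G → Z → Z} {φ : Y → Z}
    (hφ : Continuous φ) (hφe : ∀ a y, φ (σY a y) = σZ a (φ y))
    (h : GHomotopicOn G σX σY f g S) : GHomotopicOn G σX σZ (φ ∘ f) (φ ∘ g) S := by
  obtain ⟨H, hH, h0, h1, hequiv⟩ := h
  refine ⟨φ ∘ H, hφ.comp_continuousOn hH, fun x hx => congrArg φ (h0 x hx),
    fun x hx => congrArg φ (h1 x hx), fun a x hx t => ?_⟩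
  simp only [Function.comp_apply, hequiv a x hx, hφe]

theorem comp_right {W : Type*} [TopologicalSpace W] {σW : G → W → W} {ψ : W → X}
    {T : Set W} (hψ : Continuous ψ) (hψe : ∀ a w, ψ (σW a w) = σX a (ψ w)) (hT : MapsTo ψ T S)
    (h : GHomotopicOn G σX σY f g S) : GHomotopicOn G σW σY (f ∘ ψ) (g ∘ ψ) T := by
  obtain ⟨H, hH, h0, h1, hequiv⟩ := h
  refine ⟨fun p => H (ψ p.1, p.2), hH.comp (by fun_prop) fun p hp => ⟨hT hp.1, trivial⟩,
    fun w hw => h0 _ (hT hw), fun w hw => h1 _ (hT hw), fun a w hw t => ?_⟩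
  simp only [hψe, hequiv a _ (hT hw)]

theorem restrictGroup {K : Type*} (φ : K → G) (h : GHomotopicOn G σX σY f g S) :
    GHomotopicOn K (fun b => σX (φ b)) (fun b => σY (φ b)) f g S := by
  obtain ⟨H, hH, h0, h1, hequiv⟩ := h
  exact ⟨H, hH, h0, h1, fun b => hequiv (φ b)⟩

end GHomotopicOn

theorem GCategoricalSet.of_gHomotopicOn {G X : Type*} [TopologicalSpace X] {σ : G → X → X}
    {U : Set X} {g : X → X} {x₀ : X} (hU : IsOpen U) (hinv : ∀ a, ∀ x ∈ U, σ a x ∈ U)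
    (h : GHomotopicOn G σ σ id g U) (hg : ∀ x ∈ U, ∃ a, g x = σ a x₀) :
    GCategoricalSet G σ U := by
  obtain ⟨H, hH, h0, h1, hequiv⟩ := h
  exact ⟨hU, hinv, x₀, H, hH, h0, fun x hx => (h1 x hx).symm ▸ hg x hx, hequiv⟩

section SequentialTC

variable {G X : Type*} [TopologicalSpace X]

theorem gHomotopicOn_piNMap_comp_apply_zero {σ : G → X → X} {hc : ∀ a, Continuous (σ a)}
    {n : ℕ} {U : Set (Fin n → X)} {s : (Fin n → X) → C(unitInterval, X)}
    (hs : ContinuousOn s U)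
    (hse : ∀ a, ∀ y ∈ U, s (diagAct σ n a y) = pathAct σ hc a (s y)) :
    GHomotopicOn G (diagAct σ n) (diagAct σ n) (piNMap X n ∘ s) (fun y _ => s y 0) U := by
  refine ⟨fun p k => s p.1 (unitInterval.symm p.2 * seqTime n k), ?_, fun y _ => ?_,
    fun y _ => ?_, fun a y hy t => ?_⟩
  · refine continuousOn_pi.2 fun k => continuous_eval.comp_continuousOn
      (f := fun p : (Fin n → X) × unitInterval =>
        (s p.1, unitInterval.symm p.2 * seqTime n k)) ?_
    exact (hs.comp continuousOn_fst fun p hp => hp.1).prodMk (by fun_prop)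
  · ext k
    simp [piNMap]
  · simp
  · funext k
    simp only [hse a y hy]
    rfl

theorem seqTime_zero (m : ℕ) : seqTime (m + 1) 0 = 0 := by
  ext
  simp [seqTime]

theorem gHomotopicOn_id_const_apply_zero {σ : G → X → X} {hc : ∀ a, Continuous (σ a)}
    {m : ℕ} {U : Set (Fin (m + 1) → X)} {s : (Fin (m + 1) → X) → C(unitInterval, X)}
    (hs : ContinuousOn s U)
    (hse : ∀ a, ∀ y ∈ U, s (diagAct σ (m + 1) a y) = pathAct σ hc a (s y))
    (hK : GHomotopicOn G (diagAct σ (m + 1)) (diagAct σ (m + 1)) (piNMap X (m + 1) ∘ s) id U) :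
    GHomotopicOn G (diagAct σ (m + 1)) (diagAct σ (m + 1)) id (fun y _ => y 0) U := by
  have hhead := hK.comp_left (σZ := diagAct σ (m + 1)) (φ := fun y _ => y 0)
    (by fun_prop) fun _ _ => rfl
  simp only [Function.comp_def, piNMap, seqTime_zero, id] at hhead
  exact hK.symm.trans ((gHomotopicOn_piNMap_comp_apply_zero hs hse).trans hhead)

end SequentialTC

section Slice

variable {G K X : Type*} {σ : G → X → X} {φ : K → G} {a : X} {m : ℕ}

theorem vecCons_diagAct_of_fixed (hfix : ∀ b, σ (φ b) a = a) (b : K) (x : Fin m → X) :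
    Matrix.vecCons a (diagAct (fun b => σ (φ b)) m b x) =
      diagAct σ (m + 1) (φ b) (Matrix.vecCons a x) := by
  funext i
  refine Fin.cases ?_ (fun i => rfl) i
  exact (hfix b).symm

theorem gCategoricalSet_preimage_vecCons [TopologicalSpace X] [Nonempty K]
    (hfix : ∀ b, σ (φ b) a = a) {U : Set (Fin (m + 1) → X)} (hU : IsOpen U)
    (hinv : ∀ g, ∀ y ∈ U, diagAct σ (m + 1) g y ∈ U)
    (h : GHomotopicOn G (diagAct σ (m + 1)) (diagAct σ (m + 1)) id (fun y _ => y 0) U) :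
    GCategoricalSet K (diagAct (fun b => σ (φ b)) m) (Matrix.vecCons a ⁻¹' U) := by
  have hcons : Continuous (Matrix.vecCons a : (Fin m → X) → Fin (m + 1) → X) :=
    continuous_const.matrixVecCons continuous_id
  have hslice := ((h.comp_left (σZ := diagAct σ m) (φ := Matrix.vecTail)
    (continuous_pi fun _ => continuous_apply _) fun _ _ => rfl).restrictGroup φ).comp_right
    hcons (vecCons_diagAct_of_fixed hfix) (mapsTo_preimage _ U)
  simp only [Function.comp_def, id, Matrix.tail_cons, Matrix.cons_val_zero] at hslice
  obtain ⟨b₀⟩ := ‹Nonempty K›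
  refine .of_gHomotopicOn (hU.preimage hcons) (fun b x hx => ?_) hslice
    (x₀ := fun _ => a) fun _ _ => ⟨b₀, funext fun _ => (hfix b₀).symm⟩
  rw [mem_preimage, vecCons_diagAct_of_fixed hfix]
  exact hinv _ _ hx

end Slice

theorem eqCat_le_eqSecat_of_preimage {K G Y E B : Type*} [TopologicalSpace Y]
    [TopologicalSpace E] [TopologicalSpace B] {σY : K → Y → Y} {σE : G → E → E}
    {σB : G → B → B} {p : E → B} (j : Y → B)
    (hj : ∀ U : Set B, IsOpen U → (∀ g, ∀ b ∈ U, σB g b ∈ U) → ∀ s : B → E, ContinuousOn s U →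
      (∀ g, ∀ b ∈ U, s (σB g b) = σE g (s b)) → GHomotopicOn G σB σB (p ∘ s) id U →
      GCategoricalSet K σY (j ⁻¹' U)) :
    eqCat K σY ≤ eqSecat G σE σB p := by
  refine sInf_le_sInf ?_
  rintro _ ⟨k, rfl, U, hUopen, hUinv, hUcover, hUsec⟩
  refine ⟨k, rfl, fun i => j ⁻¹' U i, fun y => hUcover (j y), fun i => ?_⟩
  obtain ⟨s, hs, hse, hK⟩ := hUsec i
  exact hj _ (hUopen i) (hUinv i) s hs hse hK

theorem stmt_0_general {G : Type*} [Group G] [TopologicalSpace G]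
    {X : Type*} [TopologicalSpace X] [MulAction G X] [ContinuousSMul G X]
    (n : ℕ) (hn : 2 ≤ n) (a : X) :
    eqCat ↥(MulAction.stabilizer G a)
        (diagAct (fun (h : ↥(MulAction.stabilizer G a)) (x : X) => (h : G) • x) (n - 1)) ≤
      eqTC G (fun (g : G) (x : X) => g • x) (fun g => continuous_const_smul g) n := by
  obtain ⟨m, rfl⟩ : ∃ m, n = m + 1 := ⟨n - 1, by omega⟩
  exact eqCat_le_eqSecat_of_preimage (Matrix.vecCons a) fun U hU hinv _ hs hse hK =>
    gCategoricalSet_preimage_vecCons (fun b => b.2) hU hinv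
      (gHomotopicOn_id_const_apply_zero hs hse hK)

theorem stmt_0 {G : Type*} [Group G] [TopologicalSpace G] [IsTopologicalGroup G]
    [CompactSpace G] {X : Type*} [TopologicalSpace X] [MulAction G X] [ContinuousSMul G X]
    (n : ℕ) (hn : 2 ≤ n) (a : X) :
    eqCat ↥(MulAction.stabilizer G a)
        (diagAct (fun (h : ↥(MulAction.stabilizer G a)) (x : X) => (h : G) • x) (n - 1)) ≤
      eqTC G (fun (g : G) (x : X) => g • x) (fun g => continuous_const_smul g) n :=
  stmt_0_general n hn a
end

section
/- Let G be a compact Lie group, p : E → B a G-fibration, and n ≥ 2. Then the G-map Π_n : E^I_B → E^n_B, γ ↦ (γ(0), γ(1/(n−1)), …, γ((n−2)/(n−1)), γ(1)), is a G-fibration. -/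
open Set

/-!
The path is cut at the marked times into `n - 1` segments, and the lifting problem is solved on
each segment separately. For one segment, the lift on the square of homotopy time `s` and path
time `τ` is prescribed on three sides: on `s = 0` by the initial path, on `τ = 0` and `τ = 1` by
the lifted homotopies of the two marked points. Run through as one path `uPath γ a b` (down,
across, up), these sides form a `G`-map out of `X × I` lying over the base point at time
`uHeight w`. The homotopy lifting property of `p` lifts the homotopy of base points at times
`max (uHeight w) s'` starting from it, and precomposing with the fold
`(s, τ) ↦ (foldW s τ, foldS s τ)`, which sends the three sides of the square to the matching
points at `s' = 0` and satisfies `max (uHeight (foldW s τ)) (foldS s τ) = s`, lifts the square.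
The lifted squares agree along common edges and are concatenated.
-/

local notation "I" => unitInterval

noncomputable abbrev projI : ℝ → I := projIcc 0 1 zero_le_one

lemma coe_projI {r : ℝ} (h₀ : 0 ≤ r) (h₁ : r ≤ 1) : (projI r : ℝ) = r := by
  rw [projI, projIcc_of_mem _ ⟨h₀, h₁⟩]

@[fun_prop]
lemma continuous_projI : Continuous projI := continuous_projIcc

namespace SquareFold

noncomputable section

/-- The height `s` reached at `w` by the path that runs down the side `τ = 0` of the square,
along the bottom `s = 0` and up the side `τ = 1`, each in a third of the time. -/
def uHeight (w : ℝ) : ℝ := max 0 (max (1 - 3 * w) (3 * w - 2))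

/-- On the collars `3 τ ≤ s` and `3 - 3 τ ≤ s`, where `foldS s τ < s`, the clamp pins `foldW` to
the points `(1 - s) / 3` and `(2 + s) / 3` at height `s` on the sides; `4` is the least factor
for which the line leaves the window `[1 - s, 2 + s]` on both collars. -/
def foldW (s τ : ℝ) : ℝ := max (1 - s) (min (2 + s) (1 + τ + 4 * s * (2 * τ - 1))) / 3

def foldS (s τ : ℝ) : ℝ := min s (min (3 * τ) (3 - 3 * τ))

variable {s τ : ℝ}

lemma foldW_bounds (hs : s ∈ I) : (1 - s) / 3 ≤ foldW s τ ∧ foldW s τ ≤ (2 + s) / 3 := by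
  obtain ⟨hs₀, hs₁⟩ := hs
  unfold foldW
  constructor
  · gcongr; exact le_max_left _ _
  · gcongr; exact max_le (by linarith) (min_le_left _ _)

lemma foldW_mem (hs : s ∈ I) : foldW s τ ∈ I := by
  obtain ⟨h₁, h₂⟩ := foldW_bounds (τ := τ) hs
  exact ⟨by linarith [hs.2], by linarith [hs.2]⟩

lemma foldS_mem (hs : s ∈ I) (hτ : τ ∈ I) : foldS s τ ∈ I :=
  ⟨le_min hs.1 (le_min (by linarith [hτ.1]) (by linarith [hτ.2])), (min_le_left _ _).trans hs.2⟩

lemma foldW_zero_right (hs : s ∈ I) : foldW s 0 = (1 - s) / 3 := by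
  unfold foldW
  rw [min_eq_right (by linarith [hs.1]), max_eq_left (by linarith [hs.1])]

lemma foldW_one_right (hs : s ∈ I) : foldW s 1 = (2 + s) / 3 := by
  unfold foldW
  rw [min_eq_left (by linarith [hs.1]), max_eq_right (by linarith [hs.1])]

lemma foldW_zero_left (hτ : τ ∈ I) : foldW 0 τ = (1 + τ) / 3 := by
  unfold foldW
  rw [min_eq_right (by linarith [hτ.2]), max_eq_right (by linarith [hτ.1])]
  ring

lemma foldS_zero_left (hτ : τ ∈ I) : foldS 0 τ = 0 :=
  min_eq_left (le_min (by linarith [hτ.1]) (by linarith [hτ.2]))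

lemma foldS_zero_right (hs : 0 ≤ s) : foldS s 0 = 0 := by
  simp [foldS, hs]

lemma foldS_one_right (hs : 0 ≤ s) : foldS s 1 = 0 := by
  simp [foldS, hs]

lemma uHeight_nonneg (w : ℝ) : 0 ≤ uHeight w := le_max_left _ _

lemma uHeight_of_le_third {w : ℝ} (hw : w ≤ 1 / 3) : uHeight w = 1 - 3 * w := by
  unfold uHeight
  rw [max_eq_left (show 3 * w - 2 ≤ 1 - 3 * w by linarith), max_eq_right (by linarith)]

lemma uHeight_of_mem_middle {w : ℝ} (h₁ : 1 / 3 ≤ w) (h₂ : w ≤ 2 / 3) : uHeight w = 0 :=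
  max_eq_left (max_le (by linarith) (by linarith))

lemma uHeight_of_two_thirds_le {w : ℝ} (hw : 2 / 3 ≤ w) : uHeight w = 3 * w - 2 := by
  unfold uHeight
  rw [max_eq_right (show 1 - 3 * w ≤ 3 * w - 2 by linarith), max_eq_right (by linarith)]

@[fun_prop]
lemma continuous_uHeight : Continuous uHeight := by
  unfold uHeight; fun_prop

@[fun_prop]
lemma continuous_foldW : Continuous fun q : ℝ × ℝ => foldW q.1 q.2 := by
  unfold foldW; fun_prop

@[fun_prop]
lemma continuous_foldS : Continuous fun q : ℝ × ℝ => foldS q.1 q.2 := by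
  unfold foldS; fun_prop

lemma max_uHeight_foldW_foldS (hs : s ∈ I) :
    max (uHeight (foldW s τ)) (foldS s τ) = s := by
  obtain ⟨hs₀, hs₁⟩ := hs
  obtain ⟨hW₁, hW₂⟩ := foldW_bounds (τ := τ) ⟨hs₀, hs₁⟩
  have hu : uHeight (foldW s τ) ≤ s := max_le hs₀ (max_le (by linarith) (by linarith))
  have hS : foldS s τ ≤ s := min_le_left _ _
  by_cases h₁ : 3 * τ < s
  · have hW : foldW s τ = (1 - s) / 3 := by
      unfold foldW
      rw [max_eq_left ((min_le_right _ _).trans (by nlinarith))]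
    have hu' : uHeight (foldW s τ) = s := by rw [hW, uHeight_of_le_third (by linarith)]; ring
    rw [hu', max_eq_left hS]
  by_cases h₂ : 3 - 3 * τ < s
  · have hW : foldW s τ = (2 + s) / 3 := by
      unfold foldW
      rw [min_eq_left (by nlinarith), max_eq_right (by linarith)]
    have hu' : uHeight (foldW s τ) = s := by rw [hW, uHeight_of_two_thirds_le (by linarith)]; ring
    rw [hu', max_eq_left hS]
  · rw [foldS, min_eq_left (le_min (not_lt.1 h₁) (not_lt.1 h₂)), max_eq_right hu]

end

end SquareFold

section GSpaces

variable {G : Type*} [Group G] [TopologicalSpace G]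

lemma IsGAction.prod_left {X : Type*} [TopologicalSpace X] {σ : G → X → X}
    (hσ : IsGAction G σ) (Z : Type*) [TopologicalSpace Z] :
    IsGAction G (fun (g : G) (q : X × Z) => (σ g q.1, q.2)) := by
  obtain ⟨h₁, hmul, hc⟩ := hσ
  refine ⟨fun q => by simp [h₁], fun a b q => by simp [hmul], ?_⟩
  exact (hc.comp (continuous_fst.prodMk (continuous_fst.comp continuous_snd))).prodMk
    (continuous_snd.comp continuous_snd)

lemma IsGAction.ulift {X : Type*} [TopologicalSpace X] {σ : G → X → X}
    (hσ : IsGAction G σ) :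
    IsGAction G (fun (g : G) (y : ULift.{w} X) => ULift.up (σ g y.down)) := by
  obtain ⟨h₁, hmul, hc⟩ := hσ
  refine ⟨fun y => by simp [h₁], fun a b y => by simp [hmul], ?_⟩
  exact continuous_uliftUp.comp
    (hc.comp (continuous_fst.prodMk (continuous_uliftDown.comp continuous_snd)))

variable {E : Type u} {B : Type v} [TopologicalSpace E] [TopologicalSpace B]
  {σE : G → E → E} {σB : G → B → B} {p : E → B}

/-- The definition of a `G`-fibration only quantifies over test spaces in `Type (max u v)`;
pulling back along `ULift` gives the lifting property for test spaces in `Type u`. -/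
theorem IsGFibration.exists_lift (hp : IsGFibration G σE σB p)
    {Y : Type u} [TopologicalSpace Y] {σY : G → Y → Y} (hY : IsGAction G σY)
    {f : Y → E} {h : Y × I → B} (hf : Continuous f) (hf_eq : ∀ g y, f (σY g y) = σE g (f y))
    (hh : Continuous h) (hh_eq : ∀ g y t, h (σY g y, t) = σB g (h (y, t)))
    (h₀ : ∀ y, h (y, 0) = p (f y)) :
    ∃ H : Y × I → E, Continuous H ∧ (∀ g y t, H (σY g y, t) = σE g (H (y, t))) ∧
      (∀ y, H (y, 0) = f y) ∧ ∀ y t, p (H (y, t)) = h (y, t) := by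
  have hdown : Continuous fun q : ULift.{v} Y × I => (q.1.down, q.2) :=
    (continuous_uliftDown.comp continuous_fst).prodMk continuous_snd
  obtain ⟨H, hHc, hH_eq, hH₀, hHp⟩ := hp.2.2 (ULift.{v} Y) inferInstance _ hY.ulift
    (fun y => f y.down) (fun q => h (q.1.down, q.2)) (hf.comp continuous_uliftDown)
    (fun g y => hf_eq g y.down) (hh.comp hdown) (fun g y t => hh_eq g y.down t)
    (fun y => h₀ y.down)
  exact ⟨fun q => H (⟨q.1⟩, q.2),
    hHc.comp ((continuous_uliftUp.comp continuous_fst).prodMk continuous_snd),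
    fun g y t => hH_eq g ⟨y⟩ t, fun y => hH₀ ⟨y⟩, fun y t => hHp ⟨y⟩ t⟩

end GSpaces

section UPath

open SquareFold

variable {X E : Type*}

noncomputable def uPath (γ a b : X × I → E) (q : X × I) : E :=
  if (q.2 : ℝ) ≤ 1 / 3 then a (q.1, projI (1 - 3 * q.2))
  else if (q.2 : ℝ) ≤ 2 / 3 then γ (q.1, projI (3 * q.2 - 1))
  else b (q.1, projI (3 * q.2 - 2))

variable {γ a b : X × I → E}

lemma uPath_of_le_third {x : X} {t : I} (ht : (t : ℝ) ≤ 1 / 3) :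
    uPath γ a b (x, t) = a (x, projI (1 - 3 * t)) :=
  if_pos ht

lemma uPath_of_mem_middle (hγa : ∀ x, a (x, 0) = γ (x, 0)) {x : X} {t : I}
    (h₁ : 1 / 3 ≤ (t : ℝ)) (h₂ : (t : ℝ) ≤ 2 / 3) :
    uPath γ a b (x, t) = γ (x, projI (3 * t - 1)) := by
  rcases h₁.lt_or_eq with h₁ | h₁
  · exact (if_neg h₁.not_ge).trans (if_pos h₂)
  · rw [uPath_of_le_third h₁.ge, ← h₁]
    norm_num [hγa]

lemma uPath_of_two_thirds_le (hγb : ∀ x, b (x, 0) = γ (x, 1)) {x : X} {t : I}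
    (ht : 2 / 3 ≤ (t : ℝ)) : uPath γ a b (x, t) = b (x, projI (3 * t - 2)) := by
  rcases ht.lt_or_eq with ht | ht
  · exact (if_neg (by linarith)).trans (if_neg ht.not_ge)
  · rw [uPath, if_neg (by linarith), if_pos ht.ge, ← ht]
    norm_num [hγb]

lemma continuous_uPath [TopologicalSpace X] [TopologicalSpace E] (hγ : Continuous γ)
    (ha : Continuous a) (hb : Continuous b)
    (hγa : ∀ x, a (x, 0) = γ (x, 0)) (hγb : ∀ x, b (x, 0) = γ (x, 1)) :
    Continuous (uPath γ a b) := by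
  refine Continuous.if_le (by fun_prop) (Continuous.if_le (by fun_prop) (by fun_prop)
    (by fun_prop) continuous_const fun q hq => ?_) (by fun_prop) continuous_const fun q hq => ?_
  · rw [hq]; norm_num [hγb]
  · rw [if_pos (by rw [hq]; norm_num), hq]; norm_num [hγa]

lemma uPath_equivariant {G : Type*} {σX : G → X → X} {σE : G → E → E}
    (hγ_eq : ∀ g x t, γ (σX g x, t) = σE g (γ (x, t)))
    (ha_eq : ∀ g x t, a (σX g x, t) = σE g (a (x, t)))
    (hb_eq : ∀ g x t, b (σX g x, t) = σE g (b (x, t))) (g : G) (x : X) (t : I) :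
    uPath γ a b (σX g x, t) = σE g (uPath γ a b (x, t)) := by
  simp only [uPath]
  split_ifs <;> apply_assumption

lemma p_uPath {B : Type*} {p : E → B} (hγa : ∀ x, a (x, 0) = γ (x, 0))
    (hγb : ∀ x, b (x, 0) = γ (x, 1)) (hpγ : ∀ x t, p (γ (x, t)) = p (a (x, 0)))
    (hpb : ∀ x s, p (b (x, s)) = p (a (x, s))) (x : X) (t : I) :
    p (uPath γ a b (x, t)) = p (a (x, projI (uHeight t))) := by
  rcases le_or_gt (t : ℝ) (1 / 3) with h₁ | h₁
  · rw [uPath_of_le_third h₁, uHeight_of_le_third h₁]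
  rcases le_or_gt (t : ℝ) (2 / 3) with h₂ | h₂
  · rw [uPath_of_mem_middle hγa h₁.le h₂, uHeight_of_mem_middle h₁.le h₂, hpγ]
    simp
  · rw [uPath_of_two_thirds_le hγb h₂.le, uHeight_of_two_thirds_le h₂.le, hpb]

end UPath

section SquareLift

open SquareFold

variable {G : Type*} [Group G] [TopologicalSpace G] {E : Type u} {B : Type v}
  [TopologicalSpace E] [TopologicalSpace B] {σE : G → E → E} {σB : G → B → B} {p : E → B}

theorem IsGFibration.exists_square_lift (hp : IsGFibration G σE σB p)
    {X : Type u} [TopologicalSpace X] {σX : G → X → X} (hX : IsGAction G σX)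
    {γ a b : X × I → E} (hγ : Continuous γ) (ha : Continuous a) (hb : Continuous b)
    (hγ_eq : ∀ g x t, γ (σX g x, t) = σE g (γ (x, t)))
    (ha_eq : ∀ g x t, a (σX g x, t) = σE g (a (x, t)))
    (hb_eq : ∀ g x t, b (σX g x, t) = σE g (b (x, t)))
    (hγa : ∀ x, a (x, 0) = γ (x, 0)) (hγb : ∀ x, b (x, 0) = γ (x, 1))
    (hpγ : ∀ x t, p (γ (x, t)) = p (a (x, 0))) (hpb : ∀ x s, p (b (x, s)) = p (a (x, s))) :
    ∃ Γ : (X × I) × I → E, Continuous Γ ∧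
      (∀ g x s t, Γ ((σX g x, s), t) = σE g (Γ ((x, s), t))) ∧
      (∀ x t, Γ ((x, 0), t) = γ (x, t)) ∧ (∀ q, Γ (q, 0) = a q) ∧ (∀ q, Γ (q, 1) = b q) ∧
      ∀ q t, p (Γ (q, t)) = p (a q) := by
  obtain ⟨K, hKc, hK_eq, hK₀, hKp⟩ := hp.exists_lift (hX.prod_left I) (f := uPath γ a b)
    (h := fun r => p (a (r.1.1, projI (max (uHeight r.1.2) r.2))))
    (continuous_uPath hγ ha hb hγa hγb) (fun g q => uPath_equivariant hγ_eq ha_eq hb_eq g q.1 q.2)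
    (hp.1.comp (ha.comp (by fun_prop)))
    (fun g q t => by simp only [ha_eq, hp.2.1])
    (fun q => by simp [uHeight_nonneg, p_uPath hγa hγb hpγ hpb])
  have hK₀' : ∀ q, K (q, projI 0) = uPath γ a b q := by simpa using hK₀
  refine ⟨fun r => K ((r.1.1, projI (foldW r.1.2 r.2)), projI (foldS r.1.2 r.2)), ?_,
    fun g x s t => hK_eq g (x, _) _, fun x t => ?_, fun q => ?_, fun q => ?_, fun q t => ?_⟩
  · exact hKc.comp (by fun_prop)
  · have hw : (1 + (t : ℝ)) / 3 ∈ I := ⟨by linarith [t.2.1], by linarith [t.2.2]⟩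
    simp only [Set.Icc.coe_zero, foldS_zero_left t.2, foldW_zero_left t.2, hK₀']
    rw [uPath_of_mem_middle hγa] <;> rw [coe_projI hw.1 hw.2]
    · rw [show 3 * ((1 + (t : ℝ)) / 3) - 1 = t by ring]; simp
    all_goals linarith [t.2.1, t.2.2]
  · have hw : (1 - (q.2 : ℝ)) / 3 ∈ I := ⟨by linarith [q.2.2.2], by linarith [q.2.2.1]⟩
    simp only [Set.Icc.coe_zero, foldS_zero_right q.2.2.1, foldW_zero_right q.2.2, hK₀']
    rw [uPath_of_le_third] <;> rw [coe_projI hw.1 hw.2]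
    · rw [show 1 - 3 * ((1 - (q.2 : ℝ)) / 3) = q.2 by ring]; simp
    all_goals linarith [q.2.2.1, q.2.2.2]
  · have hw : (2 + (q.2 : ℝ)) / 3 ∈ I := ⟨by linarith [q.2.2.1], by linarith [q.2.2.2]⟩
    simp only [Set.Icc.coe_one, foldS_one_right q.2.2.1, foldW_one_right q.2.2, hK₀']
    rw [uPath_of_two_thirds_le hγb] <;> rw [coe_projI hw.1 hw.2]
    · rw [show 3 * ((2 + (q.2 : ℝ)) / 3) - 2 = q.2 by ring]; simp
    all_goals linarith [q.2.2.1, q.2.2.2]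
  · have hW := foldW_mem (τ := t) q.2.2
    have hS := foldS_mem q.2.2 t.2
    rw [hKp]
    simp only [coe_projI hW.1 hW.2, coe_projI hS.1 hS.2, max_uHeight_foldW_foldS q.2.2]
    simp

end SquareLift

section Concatenation

variable {Y E : Type*} {k : ℕ}

noncomputable def stripIndex (k : ℕ) (t : I) : Fin (k + 1) :=
  ⟨min k ⌊(t : ℝ) * (k + 1)⌋₊, Nat.lt_succ_of_le (min_le_left _ _)⟩

lemma stripIndex_le (t : I) : ((stripIndex k t : ℕ) : ℝ) ≤ t * (k + 1) :=
  (Nat.cast_le.2 (min_le_right _ _)).trans (Nat.floor_le (by have := t.2.1; positivity))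

lemma le_stripIndex_add_one (t : I) : (t : ℝ) * (k + 1) ≤ (stripIndex k t : ℕ) + 1 := by
  rcases le_total ⌊(t : ℝ) * (k + 1)⌋₊ k with h | h
  · rw [stripIndex, Fin.val_mk, min_eq_right h]
    exact (Nat.lt_floor_add_one _).le
  · rw [stripIndex, Fin.val_mk, min_eq_left h]
    nlinarith [t.2.2]

noncomputable def concatStrips (Γ : Fin (k + 1) → Y × I → E) (q : Y × I) : E :=
  Γ (stripIndex k q.2) (q.1, projI (q.2 * (k + 1) - stripIndex k q.2))

variable {Γ : Fin (k + 1) → Y × I → E}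

lemma concatStrips_eq (hΓ : ∀ (i : Fin k) y, Γ i.castSucc (y, 1) = Γ i.succ (y, 0))
    {i : Fin (k + 1)} {y : Y} {t : I} (h₁ : (i : ℝ) ≤ t * (k + 1))
    (h₂ : (t : ℝ) * (k + 1) ≤ i + 1) :
    concatStrips Γ (y, t) = Γ i (y, projI (t * (k + 1) - i)) := by
  have hi : (i : ℕ) ≤ k := Nat.lt_succ_iff.1 i.2
  rcases h₂.lt_or_eq with h₂ | h₂
  · have hfl : ⌊(t : ℝ) * (k + 1)⌋₊ = i :=
      (Nat.floor_eq_iff ((Nat.cast_nonneg _).trans h₁)).2 ⟨h₁, h₂⟩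
    have : stripIndex k t = i := Fin.ext (by simp [stripIndex, hfl, hi])
    rw [concatStrips, this]
  have hfl : ⌊(t : ℝ) * (k + 1)⌋₊ = i + 1 := by rw [h₂]; exact_mod_cast Nat.floor_natCast _
  by_cases hik : (i : ℕ) < k
  · have : stripIndex k t = (Fin.mk i hik).succ := Fin.ext (by simp [stripIndex, hfl]; omega)
    rw [concatStrips, this, h₂]
    simpa using (hΓ ⟨i, hik⟩ y).symm
  · have : stripIndex k t = i := Fin.ext (by simp [stripIndex, hfl]; omega)
    rw [concatStrips, this]

lemma continuous_concatStrips [TopologicalSpace Y] [TopologicalSpace E]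
    (hΓc : ∀ i, Continuous (Γ i))
    (hΓ : ∀ (i : Fin k) y, Γ i.castSucc (y, 1) = Γ i.succ (y, 0)) :
    Continuous (concatStrips Γ) := by
  let strip : Fin (k + 1) → Set (Y × I) :=
    fun i => {q | (i : ℝ) ≤ q.2 * (k + 1) ∧ (q.2 : ℝ) * (k + 1) ≤ i + 1}
  refine (locallyFinite_of_finite strip).continuous ?_ (fun i => ?_) (fun i => ?_)
  · exact eq_univ_of_forall fun q =>
      mem_iUnion.2 ⟨stripIndex k q.2, stripIndex_le _, le_stripIndex_add_one _⟩
  · have hr : Continuous fun q : Y × I => (q.2 : ℝ) * (k + 1) := by fun_prop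
    exact (isClosed_le continuous_const hr).inter (isClosed_le hr continuous_const)
  · exact ((hΓc i).comp (by fun_prop)).continuousOn.congr fun q hq => concatStrips_eq hΓ hq.1 hq.2

lemma concatStrips_node (hΓ : ∀ (i : Fin k) y, Γ i.castSucc (y, 1) = Γ i.succ (y, 0))
    (i : Fin (k + 1)) (y : Y) : concatStrips Γ (y, projI (i / (k + 1))) = Γ i (y, 0) := by
  have hmem : (i : ℝ) / (k + 1) ∈ I :=
    ⟨by positivity, (div_le_one (by positivity)).2 (by exact_mod_cast i.2.le)⟩
  have hr : ((projI (i / (k + 1)) : I) : ℝ) * (k + 1) = i := by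
    rw [coe_projI hmem.1 hmem.2]; field_simp
  rw [concatStrips_eq hΓ hr.ge (by linarith), hr]
  simp

lemma concatStrips_one (hΓ : ∀ (i : Fin k) y, Γ i.castSucc (y, 1) = Γ i.succ (y, 0)) (y : Y) :
    concatStrips Γ (y, 1) = Γ (Fin.last k) (y, 1) := by
  rw [concatStrips_eq hΓ (i := Fin.last k) (by simp) (by simp)]
  simp

end Concatenation

section PathFibration

lemma continuous_PiN {E B : Type*} [TopologicalSpace E] (p : E → B) (n : ℕ) :
    Continuous (PiN p n) :=
  (continuous_pi fun i =>
    (continuous_eval_const (seqTime n i)).comp continuous_subtype_val).subtype_mk _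

variable {G : Type*} [Group G] [TopologicalSpace G] {E : Type u} {B : Type v}
  [TopologicalSpace E] [TopologicalSpace B] {σE : G → E → E} {σB : G → B → B} {p : E → B}

lemma seqTime_eq_projI {k : ℕ} (j : Fin (k + 2)) : seqTime (k + 2) j = projI (j / (k + 1)) := by
  rw [← projIcc_val zero_le_one (seqTime (k + 2) j)]
  congr 1
  simp only [seqTime]
  push_cast
  ring

lemma seqTime_last (k : ℕ) : seqTime (k + 2) (Fin.last (k + 1)) = 1 := by
  rw [seqTime_eq_projI, Fin.val_last, Nat.cast_add_one, div_self (by positivity)]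
  simp

theorem exists_strip_lift (hp : IsGFibration G σE σB p) (hc : ∀ g, Continuous (σE g))
    (hpE : ∀ g e e', p e = p e' → p (σE g e) = p (σE g e')) {k : ℕ}
    {X : Type u} [TopologicalSpace X] {σX : G → X → X} (hX : IsGAction G σX)
    {f : X → ParPath p} {h : X × I → FibProd p (k + 2)} (hf : Continuous f)
    (hf_eq : ∀ g x, f (σX g x) = parPathAct σE hc p hpE g (f x)) (hh : Continuous h)
    (hh_eq : ∀ g x t, h (σX g x, t) = fibProdAct σE p hpE (k + 2) g (h (x, t)))
    (h₀ : ∀ x, h (x, 0) = PiN p (k + 2) (f x)) (i : Fin (k + 1)) :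
    ∃ Γ : (X × I) × I → E, Continuous Γ ∧
      (∀ g x s t, Γ ((σX g x, s), t) = σE g (Γ ((x, s), t))) ∧
      (∀ x t, Γ ((x, 0), t) = (f x).1 (projI ((i + t) / (k + 1)))) ∧
      (∀ q, Γ (q, 0) = (h q).1 i.castSucc) ∧ (∀ q, Γ (q, 1) = (h q).1 i.succ) ∧
      ∀ q t, p (Γ (q, t)) = p ((h q).1 i.castSucc) := by
  have hpath : Continuous fun x => (f x).1 := continuous_subtype_val.comp hf
  have hpts : Continuous fun q => (h q).1 := continuous_subtype_val.comp hh
  refine hp.exists_square_lift hX (γ := fun q => (f q.1).1 (projI ((i + q.2) / (k + 1))))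
    (by fun_prop) ((continuous_apply _).comp hpts) ((continuous_apply _).comp hpts)
    (fun g x t => by rw [hf_eq]; rfl)
    (fun g x t => by rw [hh_eq]; rfl) (fun g x t => by rw [hh_eq]; rfl)
    (fun x => ?_) (fun x => ?_) (fun x t => ?_) (fun x s => (h (x, s)).2 _ _)
  · rw [h₀]
    simp [PiN, seqTime_eq_projI]
  · rw [h₀]
    simp [PiN, seqTime_eq_projI]
  · rw [h₀]
    exact (f x).2 _ _

theorem isGFibration_PiN (hp : IsGFibration G σE σB p) (hc : ∀ g, Continuous (σE g))
    (hpE : ∀ g e e', p e = p e' → p (σE g e) = p (σE g e')) (k : ℕ) :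
    IsGFibration G (parPathAct σE hc p hpE) (fibProdAct σE p hpE (k + 2)) (PiN p (k + 2)) := by
  refine ⟨continuous_PiN p _, fun _ _ => rfl, ?_⟩
  intro X _ σX hX f h hf hf_eq hh hh_eq h₀
  choose Γ hΓc hΓ_eq hΓ_bot hΓa hΓb hΓp using exists_strip_lift hp hc hpE hX hf hf_eq hh hh_eq h₀
  have hmatch : ∀ (i : Fin k) q, Γ i.castSucc (q, 1) = Γ i.succ (q, 0) := fun i q => by
    rw [hΓb, hΓa, Fin.succ_castSucc]
  let M : C((X × I) × I, E) := ⟨concatStrips Γ, continuous_concatStrips hΓc hmatch⟩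
  have hMp : ∀ q t, p (M (q, t)) = p ((h q).1 0) := fun q t => (hΓp _ _ _).trans ((h q).2 _ _)
  refine ⟨fun q => ⟨M.curry q, fun s t => (hMp q s).trans (hMp q t).symm⟩,
    M.curry.continuous.subtype_mk _, fun g x s => ?_, fun x => ?_, fun x s => ?_⟩
  · exact Subtype.ext (ContinuousMap.ext fun t => hΓ_eq _ _ _ _ _)
  · refine Subtype.ext (ContinuousMap.ext fun t => ?_)
    have hτ : (t : ℝ) * (k + 1) - stripIndex k t ∈ I :=
      ⟨by linarith [stripIndex_le (k := k) t], by linarith [le_stripIndex_add_one (k := k) t]⟩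
    change Γ _ ((x, 0), _) = _
    rw [hΓ_bot, coe_projI hτ.1 hτ.2, add_sub_cancel, mul_div_cancel_right₀ _ (by positivity)]
    simp
  · refine Subtype.ext (funext fun j => ?_)
    change concatStrips Γ ((x, s), seqTime (k + 2) j) = _
    induction j using Fin.lastCases with
    | last => rw [seqTime_last, concatStrips_one hmatch, hΓb, Fin.succ_last]
    | cast i => rw [seqTime_eq_projI, Fin.val_castSucc, concatStrips_node hmatch, hΓa]

end PathFibration

theorem stmt_3 {G : Type*} [Group G] [TopologicalSpace G]
    {E B : Type*} [TopologicalSpace E] [TopologicalSpace B]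
    [MulAction G E] [ContinuousSMul G E] [MulAction G B]
    (p : E → B)
    (hp : IsGFibration G (fun (a : G) (e : E) => a • e) (fun (a : G) (b : B) => a • b) p)
    (n : ℕ) (hn : 2 ≤ n) :
    IsGFibration G
      (parPathAct (fun (a : G) (e : E) => a • e) (fun a => continuous_const_smul a) p
        (fun a e e' h => by rw [hp.2.1, hp.2.1, h]))
      (fibProdAct (fun (a : G) (e : E) => a • e) p
        (fun a e e' h => by rw [hp.2.1, hp.2.1, h]) n)
      (PiN p n) := by
  obtain ⟨k, rfl⟩ : ∃ k, n = k + 2 := ⟨n - 2, by omega⟩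
  exact isGFibration_PiN hp _ _ k
end
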